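/- With m, m*, ρ as in the reciprocity identity, suppose the Kolmogorov reversibility condition m(y,t;x,s) = m*(y,s;x,t) holds for all x, y and all s < t. Then ρ(x,t) = ρ(x,s) for every x and all s < t; i.e., ρ is independent of time. -/

import Mathlib

/-- under Kolmogorov's reversibility condition `m(y,t;x,s) = m*(y,s;x,t)`,
the density `ρ = u·v` is independent of time. -/
theorem stmt_5 {X : Type*} (g : X → ℝ → X → ℝ → ℝ) (u v : X → ℝ → ℝ)
    (hgpos : ∀ x y s t, s < t → 0 < g x t y s)
    (hupos : ∀ x t, 0 < u x t) (hvpos : ∀ x t, 0 < v x t)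
    (gs : X → ℝ → X → ℝ → ℝ) (hgs : ∀ x s y t, gs x s y t = g y t x s)
    (m : X → ℝ → X → ℝ → ℝ) (hm : ∀ x t y s, m x t y s = g x t y s * u y s / u x t)
    (ms : X → ℝ → X → ℝ → ℝ) (hms : ∀ x s y t, ms x s y t = gs x s y t * v y t / v x s)
    (ρ : X → ℝ → ℝ) (hρ : ∀ x t, ρ x t = u x t * v x t)
    (hrev : ∀ x y s t, s < t → m y t x s = ms y s x t) :
    ∀ x s t, s < t → ρ x t = ρ x s := by
  intro x s t hst
  have hdiag := hrev x x s t hst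
  rw [hm, hms, hgs, mul_div_assoc, mul_div_assoc] at hdiag
  have hratio : u x s / u x t = v x t / v x s :=
    mul_left_cancel₀ (hgpos x x s t hst).ne' hdiag
  rw [div_eq_div_iff (hupos x t).ne' (hvpos x s).ne'] at hratio
  rw [hρ, hρ, hratio, mul_comm]
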